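/- arXiv:1708.09100 — 5 statements merged into one kernel-verified Lean document; each statement's English description precedes it below -/
import Mathlib

section
/- Let k ≥ 2 be an integer with distinct prime factors p_1, ..., p_m. Then for every positive integer n, 𝔰((Z/kZ)^n) < 3k·(r(F_{p_1}^{n}) + ... + r(F_{p_m}^{n})). -/
/-
A multiset `T` in an abelian group is balanced about `c` if for every `σ ≤ |T|` it has a
sub-multiset of size `σ` with sum `σ • c`. In a finite abelian group `G`, every multiset of more
than `r(G) (3^j - 1)` elements contains a balanced sub-multiset of size `3^j`: extract `2 r(G) + 1`
disjoint balanced sub-multisets of size `3^(j-1)`; among their centres one occurs three times or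
three distinct ones form a progression `x + z = 2y`, and the union of the three is balanced
about `y`. With `3^j ≥ q` this yields `q` elements summing to `q • c = 0` in `(ℤ/q)^n`, so
`𝔰((ℤ/p)^n) ≤ 3(p - 1) r(F_p^n) + 1`. The classical bound
`𝔰(G) ≤ exp(G/H) (𝔰(H) - 1) + 𝔰(G/H)` with `H = p (ℤ/pa)^n ≅ (ℤ/a)^n` then gives
`𝔰((ℤ/k)^n) ≤ 3(k - 1) ∑_{p ∣ k} r(F_p^n) + 1` by induction on the prime factors of `k`.
-/

/-- A finite set in an abelian group is free of three-term arithmetic progressions: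
it contains no three distinct elements x, y, z with x + z = 2y.
(Note that x ≠ z and x + z = y + y automatically force x, y, z to be pairwise distinct.) -/
def APFree {G : Type*} [AddCommGroup G] (A : Finset G) : Prop :=
  ∀ x ∈ A, ∀ y ∈ A, ∀ z ∈ A, x ≠ z → x + z ≠ y + y

/-- r(G): the largest size of a subset of G without a three-term arithmetic progression. -/
noncomputable def rAP (G : Type*) [AddCommGroup G] : ℕ :=
  sSup {k | ∃ A : Finset G, APFree A ∧ A.card = k}

/-- The Erdős–Ginzburg–Ziv constant 𝔰(G): the smallest positive integer s such that every
sequence (multiset) of s elements of G has a subsequence of length exp(G) summing to zero. -/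
noncomputable def EGZ (G : Type*) [AddCommGroup G] : ℕ :=
  sInf {s | 0 < s ∧ ∀ m : Multiset G, Multiset.card m = s →
    ∃ t ≤ m, Multiset.card t = AddMonoid.exponent G ∧ t.sum = 0}

/-- 𝔤(G): the smallest integer a such that every subset of G of size at least a contains
exp(G) distinct elements summing to zero. -/
noncomputable def gEGZ (G : Type*) [AddCommGroup G] : ℕ :=
  sInf {a | ∀ A : Finset G, a ≤ A.card →
    ∃ B ⊆ A, B.card = AddMonoid.exponent G ∧ ∑ x ∈ B, x = 0}

namespace Multiset

variable {α β : Type*}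

theorem exists_le_card_eq {s : Multiset α} {n : ℕ} (h : n ≤ card s) :
    ∃ t ≤ s, card t = n := by
  obtain ⟨t, ht⟩ := card_pos_iff_exists_mem.mp
    (by rw [card_powersetCard]; exact Nat.choose_pos h : 0 < card (powersetCard n s))
  exact ⟨t, mem_powersetCard.mp ht⟩

theorem exists_le_map_eq {f : α → β} {s : Multiset α} {t : Multiset β} (h : t ≤ s.map f) :
    ∃ u ≤ s, u.map f = t := by
  classical
  induction t using Multiset.induction generalizing s with
  | empty => exact ⟨0, zero_le _, rfl⟩
  | cons b t ih =>
    obtain ⟨a, ha, rfl⟩ := mem_map.mp (mem_of_le h (mem_cons_self _ _))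
    rw [← cons_erase ha, map_cons, cons_le_cons_iff] at h
    obtain ⟨u, hu, rfl⟩ := ih h
    exact ⟨a ::ₘ u, (cons_le_cons a hu).trans (cons_erase ha).le, map_cons _ _ _⟩

theorem join_le_join {S T : Multiset (Multiset α)} (h : S ≤ T) : join S ≤ join T := by
  obtain ⟨U, rfl⟩ := le_iff_exists_add.mp h
  rw [join_add]
  exact le_add_right _ _

theorem card_join_of_forall_card_eq {S : Multiset (Multiset α)} {a : ℕ}
    (h : ∀ t ∈ S, card t = a) : card (join S) = a * card S := by
  rw [card_join, map_congr rfl h, map_const', sum_replicate, smul_eq_mul, mul_comm]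

theorem card_le_two_mul_card_toFinset [DecidableEq α] {s : Multiset α}
    (h : ∀ x, count x s ≤ 2) : card s ≤ 2 * s.toFinset.card := by
  calc card s = ∑ x ∈ s.toFinset, count x s := (toFinset_sum_count_eq s).symm
    _ ≤ ∑ _x ∈ s.toFinset, 2 := Finset.sum_le_sum fun x _ => h x
    _ = 2 * s.toFinset.card := by rw [Finset.sum_const, smul_eq_mul, mul_comm]

/-- The bound on `card m` is `a * (i - 1) + s ≤ card m`, written without truncated subtraction. -/
theorem exists_disjoint_blocks (P : Multiset α → β → Prop) {a s : ℕ}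
    (hP : ∀ m : Multiset α, s ≤ card m → ∃ t ≤ m, card t = a ∧ ∃ b, P t b) :
    ∀ (i : ℕ) (m : Multiset α), a * i + s ≤ card m + a →
      ∃ B : Multiset (Multiset α × β), card B = i ∧ (B.map Prod.fst).join ≤ m ∧
        ∀ e ∈ B, card e.1 = a ∧ P e.1 e.2
  | 0, _, _ => ⟨0, rfl, by simp, by simp⟩
  | i + 1, m, hm => by
    classical
    rw [mul_add, mul_one] at hm
    obtain ⟨t, htm, htc, b, hb⟩ := hP m (by omega)
    have hta : a ≤ card m := htc ▸ card_le_card htm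
    obtain ⟨B, hBc, hBm, hB⟩ :=
      exists_disjoint_blocks P hP i (m - t) (by rw [card_sub htm]; omega)
    refine ⟨(t, b) ::ₘ B, by rw [card_cons, hBc], ?_, ?_⟩
    · rw [map_cons, join_cons]
      exact add_le_of_le_tsub_left_of_le htm hBm
    · intro e he
      rcases mem_cons.mp he with rfl | he
      exacts [⟨htc, hb⟩, hB e he]

end Multiset

open Multiset

def ForcesZeroSum (G : Type*) [AddCommGroup G] (ℓ s : ℕ) : Prop :=
  ∀ m : Multiset G, s ≤ card m → ∃ t ≤ m, card t = ℓ ∧ t.sum = 0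

theorem ForcesZeroSum.mono {G : Type*} [AddCommGroup G] {ℓ s s' : ℕ}
    (h : ForcesZeroSum G ℓ s) (hs : s ≤ s') : ForcesZeroSum G ℓ s' :=
  fun m hm => h m (hs.trans hm)

theorem EGZ_le {G : Type*} [AddCommGroup G] {s : ℕ} (hs : 0 < s)
    (h : ForcesZeroSum G (AddMonoid.exponent G) s) : EGZ G ≤ s :=
  Nat.sInf_le ⟨hs, fun m hm => h m hm.ge⟩

/-- The classical bound `𝔰(G) ≤ exp(G/H) (𝔰(H) - 1) + 𝔰(G/H)`: the target of `f` plays `G/H`,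
the source of `ι` plays `H`. -/
theorem ForcesZeroSum.of_ker_le_range {G Q N : Type*} [AddCommGroup G] [AddCommGroup Q]
    [AddCommGroup N] {f : G →+ Q} {ι : N →+ G} (hfι : f.ker ≤ ι.range) {a b sQ sN : ℕ}
    (hQ : ForcesZeroSum Q a sQ) (hN : ForcesZeroSum N b sN) :
    ForcesZeroSum G (a * b) (a * (sN - 1) + sQ) := by
  intro m hm
  have hblock : ∀ m' : Multiset G, sQ ≤ card m' → ∃ t ≤ m', card t = a ∧ ∃ y, ι y = t.sum := by
    intro m' hm'
    obtain ⟨t', ht', hct', hst'⟩ := hQ (m'.map f) (by rwa [card_map])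
    obtain ⟨t, ht, rfl⟩ := exists_le_map_eq ht'
    refine ⟨t, ht, by rwa [card_map] at hct', hfι ?_⟩
    rwa [AddMonoidHom.mem_ker, map_multiset_sum]
  have hsN : a * sN ≤ a * (sN - 1) + a := by rcases sN with _ | sN <;> simp [mul_add]
  obtain ⟨B, hBc, hBm, hB⟩ :=
    exists_disjoint_blocks (fun t y => ι y = t.sum) hblock sN m (by omega)
  obtain ⟨u, hu, hcu, hsu⟩ := hN (B.map Prod.snd) (by rw [card_map, hBc])
  obtain ⟨C, hCB, rfl⟩ := exists_le_map_eq hu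
  have hC : ∀ e ∈ C, card e.1 = a ∧ ι e.2 = e.1.sum := fun e he => hB e (mem_of_le hCB he)
  refine ⟨(C.map Prod.fst).join, (join_le_join (map_le_map hCB)).trans hBm, ?_, ?_⟩
  · have hcard : ∀ t ∈ C.map Prod.fst, card t = a := by
      simp only [mem_map]
      rintro _ ⟨e, he, rfl⟩
      exact (hC e he).1
    rw [card_join_of_forall_card_eq hcard, card_map, ← hcu, card_map]
  · rw [sum_join, map_map, ← _root_.map_zero ι, ← hsu, map_multiset_sum, map_map]
    exact congrArg sum (map_congr rfl fun e he => (hC e he).2.symm)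

section Progressions

variable {G : Type*} [AddCommGroup G] [Fintype G]

theorem APFree.card_le_rAP {A : Finset G} (h : APFree A) : A.card ≤ rAP G :=
  le_csSup ⟨Fintype.card G, by rintro _ ⟨B, -, rfl⟩; exact Finset.card_le_univ B⟩ ⟨A, h, rfl⟩

theorem one_le_rAP : 1 ≤ rAP G :=
  APFree.card_le_rAP (A := {0}) fun x hx _ _ z hz hxz => by simp_all

/-- Among `2 r(G) + 1` labels, either one is repeated three times or three distinct ones
form a progression; in both cases `g e₁ + g e₃ = g e₂ + g e₂`. -/
theorem exists_triple_le_of_two_mul_rAP_lt {β : Type*} (g : β → G) {B : Multiset β}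
    (hB : 2 * rAP G < card B) :
    ∃ e₁ e₂ e₃, {e₁, e₂, e₃} ≤ B ∧ g e₁ + g e₃ = g e₂ + g e₂ := by
  classical
  by_cases hrep : ∃ x, 3 ≤ count x (B.map g)
  · obtain ⟨x, hx⟩ := hrep
    rw [count_map] at hx
    obtain ⟨T, hT, hTc⟩ := exists_le_card_eq hx
    obtain ⟨e₁, e₂, e₃, rfl⟩ := card_eq_three.mp hTc
    have hg : ∀ e ∈ ({e₁, e₂, e₃} : Multiset β), g e = x :=
      fun e he => ((mem_filter.mp (mem_of_le hT he)).2).symm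
    refine ⟨e₁, e₂, e₃, hT.trans (filter_le _ _), ?_⟩
    rw [hg e₁ (by simp), hg e₂ (by simp), hg e₃ (by simp)]
  · simp only [not_exists, not_le] at hrep
    have hcard : rAP G < (B.map g).toFinset.card := by
      have := card_le_two_mul_card_toFinset fun x => Nat.le_of_lt_succ (hrep x)
      rw [card_map] at this
      omega
    have hAP : ¬ APFree (B.map g).toFinset := fun h => h.card_le_rAP.not_gt hcard
    simp only [APFree, mem_toFinset, mem_map, not_forall, not_not, exists_prop] at hAP
    obtain ⟨_, ⟨e₁, he₁, rfl⟩, _, ⟨e₂, he₂, rfl⟩, _, ⟨e₃, he₃, rfl⟩, h₁₃, hsum⟩ := hAP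
    have h₁₂ : g e₁ ≠ g e₂ := fun h => h₁₃ (by rw [h] at hsum ⊢; exact (add_left_cancel hsum).symm)
    have h₂₃ : g e₂ ≠ g e₃ := fun h => h₁₃ (by rw [h] at hsum; exact add_right_cancel hsum)
    refine ⟨e₁, e₂, e₃, (le_iff_subset ?_).mpr ?_, hsum⟩
    · simp [ne_of_apply_ne g h₁₂, ne_of_apply_ne g h₁₃, ne_of_apply_ne g h₂₃]
    · simp [subset_iff, he₁, he₂, he₃]

end Progressions

section Balanced

variable {G : Type*} [AddCommGroup G]

def IsBalanced (c : G) (T : Multiset G) : Prop :=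
  ∀ σ ≤ card T, ∃ U ≤ T, card U = σ ∧ U.sum = σ • c

theorem isBalanced_singleton (x : G) : IsBalanced x {x} := by
  intro σ hσ
  rcases Nat.le_one_iff_eq_zero_or_eq_one.mp hσ with rfl | rfl
  · exact ⟨0, zero_le _, rfl, by simp⟩
  · exact ⟨{x}, le_rfl, rfl, by simp⟩

theorem IsBalanced.add_add {x y z : G} {s : ℕ} {M₁ M₂ M₃ : Multiset G}
    (h₁ : IsBalanced x M₁) (h₂ : IsBalanced y M₂) (h₃ : IsBalanced z M₃)
    (hc₁ : card M₁ = s) (hc₂ : card M₂ = s) (hc₃ : card M₃ = s) (hxz : x + z = y + y) :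
    IsBalanced y (M₁ + M₂ + M₃) := by
  intro σ hσ
  rw [card_add, card_add] at hσ
  -- split `σ = a + b + a` with `a, b ≤ s`; the outer parts contribute `a • (x + z) = 2a • y`
  obtain ⟨a, b, ha, hb, rfl⟩ : ∃ a b, a ≤ s ∧ b ≤ s ∧ σ = a + b + a :=
    ⟨(σ + 1 - s) / 2, σ - 2 * ((σ + 1 - s) / 2), by omega, by omega, by omega⟩
  obtain ⟨U₁, hU₁, hcU₁, hsU₁⟩ := h₁ a (hc₁ ▸ ha)
  obtain ⟨U₂, hU₂, hcU₂, hsU₂⟩ := h₂ b (hc₂ ▸ hb)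
  obtain ⟨U₃, hU₃, hcU₃, hsU₃⟩ := h₃ a (hc₃ ▸ ha)
  refine ⟨U₁ + U₂ + U₃, add_le_add (add_le_add hU₁ hU₂) hU₃, by simp [hcU₁, hcU₂, hcU₃], ?_⟩
  rw [sum_add, sum_add, hsU₁, hsU₂, hsU₃, add_nsmul, add_nsmul,
    add_right_comm (a • x), ← nsmul_add, hxz, nsmul_add, add_right_comm (a • y)]

theorem exists_isBalanced_of_card [Fintype G] (j : ℕ) (M : Multiset G)
    (hM : rAP G * (3 ^ j - 1) < card M) :
    ∃ T ≤ M, card T = 3 ^ j ∧ ∃ c, IsBalanced c T := by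
  induction j generalizing M with
  | zero =>
    obtain ⟨x, hx⟩ := card_pos_iff_exists_mem.mp (by omega : 0 < card M)
    exact ⟨{x}, singleton_le.mpr hx, rfl, x, isBalanced_singleton x⟩
  | succ j ih =>
    set r := rAP G
    have h3j : 1 ≤ 3 ^ j := Nat.one_le_pow _ _ (by norm_num)
    have hr₁ : r * (3 ^ j - 1) + r = r * 3 ^ j := by
      rw [Nat.mul_sub_one, Nat.sub_add_cancel (Nat.le_mul_of_pos_right r h3j)]
    have hr₂ : r * (3 ^ (j + 1) - 1) + r = 3 * (r * 3 ^ j) := by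
      rw [Nat.mul_sub_one, Nat.sub_add_cancel (Nat.le_mul_of_pos_right r (by omega)), pow_succ]
      ring
    obtain ⟨B, hBc, hBM, hB⟩ := exists_disjoint_blocks (fun T c => IsBalanced c T)
      ih (2 * r + 1) M (by rw [mul_add, mul_one, mul_comm, mul_assoc]; omega)
    obtain ⟨e₁, e₂, e₃, hle, hsum⟩ :=
      exists_triple_le_of_two_mul_rAP_lt Prod.snd (B := B) (by omega)
    have he : ∀ e ∈ ({e₁, e₂, e₃} : Multiset (Multiset G × G)),
        card e.1 = 3 ^ j ∧ IsBalanced e.2 e.1 :=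
      fun e he => hB e (mem_of_le hle he)
    refine ⟨e₁.1 + e₂.1 + e₃.1, ?_, ?_, e₂.2, ?_⟩
    · refine le_trans ?_ ((join_le_join (map_le_map hle)).trans hBM)
      simp [add_assoc]
    · rw [card_add, card_add, (he e₁ (by simp)).1, (he e₂ (by simp)).1, (he e₃ (by simp)).1,
        pow_succ]
      ring
    · exact (he e₁ (by simp)).2.add_add (he e₂ (by simp)).2 (he e₃ (by simp)).2
        (he e₁ (by simp)).1 (he e₂ (by simp)).1 (he e₃ (by simp)).1 hsum

theorem forcesZeroSum_of_nsmul_eq_zero [Fintype G] {q : ℕ} (hq : ∀ c : G, q • c = 0) :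
    ForcesZeroSum G q (rAP G * (3 ^ Nat.clog 3 q - 1) + 1) := by
  intro m hm
  obtain ⟨T, hTm, hTc, c, hc⟩ := exists_isBalanced_of_card (Nat.clog 3 q) m hm
  obtain ⟨U, hUT, hUc, hUs⟩ := hc q (hTc ▸ Nat.le_pow_clog (by norm_num) q)
  exact ⟨U, hUT.trans hTm, hUc, hUs.trans (hq c)⟩

end Balanced

theorem three_pow_clog_sub_one_le (q : ℕ) : 3 ^ Nat.clog 3 q - 1 ≤ 3 * (q - 1) := by
  rcases le_or_gt q 1 with hq | hq
  · simp [Nat.clog_of_right_le_one hq]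
  · have hlt := Nat.pow_pred_clog_lt_self (by norm_num : 1 < 3) hq
    have hpos := Nat.clog_pos (by norm_num : 1 < 3) hq
    rw [← Nat.succ_pred_eq_of_pos hpos, pow_succ]
    omega

namespace ZMod

/-- `y ↦ d • y`, well defined because `d * m = 0` in `ZMod (d * m)`. -/
def scaleHom (d m : ℕ) : ZMod m →+ ZMod (d * m) :=
  ZMod.lift m ⟨zmultiplesHom _ (d : ZMod (d * m)), by
    simp [zsmul_eq_mul, ← Nat.cast_mul, mul_comm]⟩

theorem exists_scaleHom_eq {d m : ℕ} {x : ZMod (d * m)}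
    (hx : ZMod.castHom (dvd_mul_right d m) (ZMod d) x = 0) : ∃ y, scaleHom d m y = x := by
  obtain ⟨z, rfl⟩ := ZMod.intCast_surjective x
  rw [map_intCast, ZMod.intCast_zmod_eq_zero_iff_dvd] at hx
  obtain ⟨w, rfl⟩ := hx
  refine ⟨w, ?_⟩
  simp [scaleHom, ZMod.lift_coe, zsmul_eq_mul, mul_comm]

end ZMod

theorem forcesZeroSum_pi_zmod_mul (n : ℕ) {p a sQ sN : ℕ}
    (hQ : ForcesZeroSum (Fin n → ZMod p) p sQ) (hN : ForcesZeroSum (Fin n → ZMod a) a sN) :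
    ForcesZeroSum (Fin n → ZMod (p * a)) (p * a) (p * (sN - 1) + sQ) := by
  refine ForcesZeroSum.of_ker_le_range
    (f := (ZMod.castHom (dvd_mul_right p a) (ZMod p)).toAddMonoidHom.compLeft (Fin n))
    (ι := (ZMod.scaleHom p a).compLeft (Fin n)) (fun x hx => ?_) hQ hN
  choose y hy using fun i => ZMod.exists_scaleHom_eq (congrFun hx i)
  exact ⟨y, funext hy⟩

theorem forcesZeroSum_pi_zmod (n : ℕ) {k : ℕ} (hk : 0 < k) :
    ForcesZeroSum (Fin n → ZMod k) k
      (3 * (k - 1) * ∑ q ∈ k.primeFactors, rAP (Fin n → ZMod q) + 1) := by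
  induction k using induction_on_primes with
  | zero => exact absurd hk (lt_irrefl 0)
  | one =>
    intro m hm
    obtain ⟨t, ht, htc⟩ := exists_le_card_eq (n := 1) (by simpa using hm)
    exact ⟨t, ht, htc, Subsingleton.elim _ _⟩
  | prime_mul p a hp ih =>
    have ha : 0 < a := Nat.pos_of_mul_pos_left hk
    have : NeZero p := ⟨hp.ne_zero⟩
    set R := ∑ q ∈ (p * a).primeFactors, rAP (Fin n → ZMod q)
    have hRa : ∑ q ∈ a.primeFactors, rAP (Fin n → ZMod q) ≤ R :=
      Finset.sum_le_sum_of_subset (Nat.primeFactors_mono (dvd_mul_left a p) hk.ne')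
    have hRp : rAP (Fin n → ZMod p) ≤ R :=
      Finset.single_le_sum (f := fun q => rAP (Fin n → ZMod q)) (fun q _ => Nat.zero_le _)
        (Nat.mem_primeFactors.mpr ⟨hp, dvd_mul_right p a, hk.ne'⟩)
    have hp' : ForcesZeroSum (Fin n → ZMod p) p (3 * (p - 1) * rAP (Fin n → ZMod p) + 1) :=
      (forcesZeroSum_of_nsmul_eq_zero fun c => by ext i; simp).mono (by
        rw [mul_comm (3 * (p - 1))]
        gcongr
        exact three_pow_clog_sub_one_le p)
    refine (forcesZeroSum_pi_zmod_mul n hp' (ih ha)).mono ?_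
    have hpa : p * a - 1 = p * (a - 1) + (p - 1) := by
      have := Nat.mul_sub_one p a
      have := Nat.le_mul_of_pos_right p ha
      have := hp.one_lt
      omega
    calc p * (3 * (a - 1) * ∑ q ∈ a.primeFactors, rAP (Fin n → ZMod q) + 1 - 1)
          + (3 * (p - 1) * rAP (Fin n → ZMod p) + 1)
        ≤ p * (3 * (a - 1) * R) + (3 * (p - 1) * R + 1) := by rw [Nat.add_sub_cancel]; gcongr
      _ = 3 * (p * a - 1) * R + 1 := by rw [hpa]; ring

theorem AddMonoid.exponent_pi_zmod {n : ℕ} (hn : 0 < n) (k : ℕ) :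
    AddMonoid.exponent (Fin n → ZMod k) = k := by
  rw [AddMonoid.exponent_pi]
  simp only [ZMod.exponent]
  exact Nat.dvd_antisymm (Finset.lcm_dvd fun _ _ => dvd_rfl)
    (Finset.dvd_lcm (Finset.mem_univ ⟨0, hn⟩))

/-- **Corollary 2.** Let k ≥ 2 be an integer with distinct prime factors p_1, ..., p_m. Then for
every positive integer n, 𝔰((ℤ/kℤ)^n) < 3k·(r(F_{p_1}^n) + ... + r(F_{p_m}^n)). -/
theorem stmt1 (k : ℕ) (hk : 2 ≤ k) (n : ℕ) (hn : 0 < n) :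
    EGZ (Fin n → ZMod k) < 3 * k * ∑ q ∈ k.primeFactors, rAP (Fin n → ZMod q) := by
  set R := ∑ q ∈ k.primeFactors, rAP (Fin n → ZMod q)
  have hp := Nat.minFac_prime (by omega : k ≠ 1)
  have : NeZero k.minFac := ⟨hp.ne_zero⟩
  have hR : 1 ≤ R := one_le_rAP.trans <| Finset.single_le_sum (f := fun q => rAP (Fin n → ZMod q))
    (fun q _ => Nat.zero_le _) (Nat.mem_primeFactors.mpr ⟨hp, k.minFac_dvd, by omega⟩)
  have hzs : ForcesZeroSum (Fin n → ZMod k) (AddMonoid.exponent (Fin n → ZMod k))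
      (3 * (k - 1) * R + 1) := by
    rw [AddMonoid.exponent_pi_zmod hn]
    exact forcesZeroSum_pi_zmod n (by omega)
  calc EGZ (Fin n → ZMod k) ≤ 3 * (k - 1) * R + 1 := EGZ_le (Nat.succ_pos _) hzs
    _ < 3 * (k - 1 + 1) * R := by rw [mul_add_one 3, add_mul]; omega
    _ = 3 * k * R := by rw [Nat.sub_add_cancel (by omega : 1 ≤ k)]
end

section
/- Let p ≥ 3 be a prime and n ≥ 1 an integer. If A ⊆ F_p^{n} does not contain p distinct elements summing to zero, then for every x ∈ A, the number of three-term arithmetic progressions contained in A with middle term x is at most (p-3)/2. -/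
/-!
Each progression `{y, x, z}` with middle term `x` meets `A \ {x}` in a pair `{y, 2x - y}`, and
this pair determines the progression, so distinct progressions give disjoint pairs. Given
`(p - 1) / 2` of them, their pairs together with `x` form `p` distinct elements of `A` whose sum
is `p • x = 0`.
-/

namespace Finset

section apUnion

variable {G : Type*} [DecidableEq G] {T : Finset (Finset G)} {x : G}

def apUnion (T : Finset (Finset G)) (x : G) : Finset G :=
  insert x (T.biUnion fun s => s.erase x)

lemma notMem_biUnion_erase : x ∉ T.biUnion fun s => s.erase x := by
  simp

lemma apUnion_subset {A : Finset G} (hx : x ∈ A) (hTA : ∀ s ∈ T, s ⊆ A) : apUnion T x ⊆ A :=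
  insert_subset hx <| biUnion_subset.mpr fun s hs => (erase_subset x s).trans (hTA s hs)

end apUnion

variable {G : Type*} [AddCommGroup G]

def IsAPWithMiddle (s : Finset G) (x : G) : Prop :=
  s.card = 3 ∧ x ∈ s ∧ ∃ y ∈ s, ∃ z ∈ s, y ≠ z ∧ y + z = x + x

variable [DecidableEq G]

namespace IsAPWithMiddle

variable {s t : Finset G} {x : G}

lemma erase_eq_pair (hs : IsAPWithMiddle s x) {w : G} (hw : w ∈ s.erase x) :
    s.erase x = {w, x + x - w} ∧ w ≠ x + x - w := by
  obtain ⟨hcard, hxs, y, hy, z, hz, hyz, hsum⟩ := hs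
  have hyx : y ≠ x := by
    rintro rfl
    exact hyz (add_left_cancel hsum).symm
  have hzx : z ≠ x := by
    rintro rfl
    exact hyz (add_right_cancel hsum)
  have hpair : s.erase x = {y, z} := by
    refine (eq_of_subset_of_card_le ?_ ?_).symm
    · simp [insert_subset_iff, *]
    · rw [card_erase_of_mem hxs, hcard, card_pair hyz]
  have hz' : z = x + x - y := eq_sub_of_add_eq' hsum
  have hy' : y = x + x - z := eq_sub_of_add_eq hsum
  rw [hpair] at hw ⊢
  rcases mem_insert.mp hw with rfl | hw
  · exact ⟨by rw [← hz'], by rwa [← hz']⟩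
  · rw [mem_singleton.mp hw, pair_comm, ← hy']
    exact ⟨rfl, hyz.symm⟩

lemma card_erase (hs : IsAPWithMiddle s x) : (s.erase x).card = 2 := by
  rw [card_erase_of_mem hs.2.1, hs.1]

lemma sum_erase (hs : IsAPWithMiddle s x) : ∑ v ∈ s.erase x, v = x + x := by
  obtain ⟨w, hw⟩ : (s.erase x).Nonempty := by rw [← card_pos, hs.card_erase]; omega
  obtain ⟨heq, hne⟩ := hs.erase_eq_pair hw
  rw [heq, sum_pair hne, add_sub_cancel]

lemma disjoint_erase (hs : IsAPWithMiddle s x) (ht : IsAPWithMiddle t x) (hst : s ≠ t) :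
    Disjoint (s.erase x) (t.erase x) := by
  refine disjoint_left.mpr fun w hws hwt => hst ?_
  rw [← insert_erase hs.2.1, ← insert_erase ht.2.1,
    (hs.erase_eq_pair hws).1, (ht.erase_eq_pair hwt).1]

end IsAPWithMiddle

section apUnion

variable {T : Finset (Finset G)} {x : G}

lemma card_apUnion (hT : ∀ s ∈ T, IsAPWithMiddle s x) :
    (apUnion T x).card = 2 * T.card + 1 := by
  rw [apUnion, card_insert_of_notMem notMem_biUnion_erase,
    card_biUnion fun s hs t ht => (hT s hs).disjoint_erase (hT t ht),
    sum_congr rfl fun s hs => (hT s hs).card_erase, sum_const, smul_eq_mul, mul_comm]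

lemma sum_apUnion (hT : ∀ s ∈ T, IsAPWithMiddle s x) :
    ∑ v ∈ apUnion T x, v = (2 * T.card + 1) • x := by
  rw [apUnion, sum_insert notMem_biUnion_erase,
    sum_biUnion fun s hs t ht => (hT s hs).disjoint_erase (hT t ht),
    sum_congr rfl fun s hs => (hT s hs).sum_erase, sum_const, ← two_nsmul, smul_smul, add_nsmul, one_nsmul, add_comm, mul_comm]

end apUnion

lemma ncard_apsWithMiddle_lt {A : Finset G} {x : G} (hx : x ∈ A) {k : ℕ}
    (hkx : (2 * k + 1) • x = 0) (hA : ¬ ∃ B ⊆ A, B.card = 2 * k + 1 ∧ ∑ v ∈ B, v = 0) :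
    {s | s ⊆ A ∧ IsAPWithMiddle s x}.ncard < k := by
  set S := {s | s ⊆ A ∧ IsAPWithMiddle s x}
  have hS : S.Finite := A.powerset.finite_toSet.subset fun s hs => by simpa using hs.1
  by_contra! hk
  rw [Set.ncard_eq_toFinset_card S hS] at hk
  obtain ⟨T, hTS, hTcard⟩ := exists_subset_card_eq hk
  have hT : ∀ s ∈ T, s ⊆ A ∧ IsAPWithMiddle s x := fun s hs => hS.mem_toFinset.mp (hTS hs)
  refine hA ⟨apUnion T x, apUnion_subset hx fun s hs => (hT s hs).1, ?_, ?_⟩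
  · rw [card_apUnion fun s hs => (hT s hs).2, hTcard]
  · rw [sum_apUnion fun s hs => (hT s hs).2, hTcard, hkx]

end Finset

theorem stmt4_general (p n : ℕ) (hp : p.Prime) (hp3 : 3 ≤ p)
    (A : Finset (Fin n → ZMod p))
    (hA : ¬ ∃ B ⊆ A, B.card = p ∧ ∑ v ∈ B, v = 0) :
    ∀ x ∈ A,
      {s : Finset (Fin n → ZMod p) | s ⊆ A ∧ s.card = 3 ∧ x ∈ s ∧
        ∃ y ∈ s, ∃ z ∈ s, y ≠ z ∧ y + z = x + x}.ncard ≤ (p - 3) / 2 := by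
  intro x hx
  have hp_odd : p % 2 = 1 := Nat.odd_iff.mp (hp.odd_of_ne_two (by omega))
  have hp_eq : 2 * ((p - 1) / 2) + 1 = p := by omega
  have hlt := Finset.ncard_apsWithMiddle_lt (k := (p - 1) / 2) hx
    (by rw [hp_eq]; exact ZModModule.char_nsmul_eq_zero p x) (by rwa [hp_eq])
  change {s | s ⊆ A ∧ Finset.IsAPWithMiddle s x}.ncard ≤ _
  omega

/-- **Lemma 5.** Let p ≥ 3 be a prime and n ≥ 1. If A ⊆ F_p^n does not contain p distinct
elements summing to zero, then for every x ∈ A, the number of three-term arithmetic progressions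
contained in A with middle term x (i.e. three-element subsets {y, x, z} of A with y ≠ z and
y + z = 2x) is at most (p-3)/2. -/
theorem stmt4 (p n : ℕ) (hp : p.Prime) (hp3 : 3 ≤ p) (hn : 1 ≤ n)
    (A : Finset (Fin n → ZMod p))
    (hA : ¬ ∃ B ⊆ A, B.card = p ∧ ∑ v ∈ B, v = 0) :
    ∀ x ∈ A,
      {s : Finset (Fin n → ZMod p) | s ⊆ A ∧ s.card = 3 ∧ x ∈ s ∧
        ∃ y ∈ s, ∃ z ∈ s, y ≠ z ∧ y + z = x + x}.ncard ≤ (p - 3) / 2 :=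
  stmt4_general p n hp hp3 A hA
end

section
/- Let p ≥ 3 be a prime and n ≥ 1 an integer. If A ⊆ F_p^{n} does not contain p distinct elements summing to zero, then the total number of three-term arithmetic progressions contained in A is at most ((p-3)/2)·|A|. -/
/-!
Each three-term progression in `A` is a middle term `y ∈ A` together with a pair `{x, z}` in
`A \ {y}` with `x + z = 2y`. For a fixed `y` these pairs are disjoint, being the orbits of the
reflection `x ↦ 2y - x`. If `(m - 1) / 2` of them existed, for odd `m` with `m • G = 0`, their
union with `{y}` would be `m` distinct elements of `A` with sum
`y + ((m - 1) / 2) • 2y = m • y = 0`. So each `y` is the middle term of at most `(m - 3) / 2`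
progressions.
-/

open Finset

variable {G : Type*} [AddCommGroup G] [DecidableEq G]

def midpointPairs (A : Finset G) (y : G) : Finset (Finset G) :=
  {t ∈ (A.erase y).powersetCard 2 | ∑ v ∈ t, v = y + y}

lemma mem_midpointPairs {A : Finset G} {y : G} {t : Finset G} :
    t ∈ midpointPairs A y ↔ (t ⊆ A.erase y ∧ t.card = 2) ∧ ∑ v ∈ t, v = y + y := by
  rw [midpointPairs, mem_filter, mem_powersetCard]

lemma eq_pair_of_mem_midpointPairs {A : Finset G} {y u : G} {t : Finset G}
    (ht : t ∈ midpointPairs A y) (hu : u ∈ t) : t = {u, y + y - u} := by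
  obtain ⟨⟨-, hcard⟩, hsum⟩ := mem_midpointPairs.1 ht
  obtain ⟨a, b, hab, rfl⟩ := card_eq_two.1 hcard
  rw [sum_pair hab] at hsum
  rcases mem_insert.1 hu with rfl | hu
  · rw [← hsum, add_sub_cancel_left]
  · rw [mem_singleton.1 hu, ← hsum, add_sub_cancel_right, pair_comm]

lemma pairwiseDisjoint_midpointPairs (A : Finset G) (y : G) :
    (midpointPairs A y : Set (Finset G)).PairwiseDisjoint id := by
  intro t ht t' ht' hne
  refine disjoint_left.2 fun u hu hu' => hne ?_
  rw [eq_pair_of_mem_midpointPairs ht hu, eq_pair_of_mem_midpointPairs ht' hu']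

lemma exists_subset_card_sum_of_le_card_midpointPairs {A : Finset G} {y : G} (hy : y ∈ A)
    {k : ℕ} (hk : k ≤ (midpointPairs A y).card) :
    ∃ B ⊆ A, B.card = 2 * k + 1 ∧ ∑ v ∈ B, v = (2 * k + 1) • y := by
  obtain ⟨Q, hQ, rfl⟩ := exists_subset_card_eq hk
  have hdisj : (Q : Set (Finset G)).PairwiseDisjoint id :=
    (pairwiseDisjoint_midpointPairs A y).subset (by simpa using hQ)
  have hmem : ∀ t ∈ Q, (t ⊆ A.erase y ∧ t.card = 2) ∧ ∑ v ∈ t, v = y + y :=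
    fun t ht => mem_midpointPairs.1 (hQ ht)
  have hunion : Q.biUnion id ⊆ A.erase y := biUnion_subset.2 fun t ht => (hmem t ht).1.1
  have hy' : y ∉ Q.biUnion id := fun h => by simpa using hunion h
  refine ⟨insert y (Q.biUnion id), insert_subset hy (hunion.trans (erase_subset y A)), ?_, ?_⟩
  · rw [card_insert_of_notMem hy', card_biUnion hdisj]
    simp only [id]
    rw [sum_congr rfl fun t ht => (hmem t ht).1.2, sum_const, smul_eq_mul]
    ring
  · rw [sum_insert hy', sum_biUnion hdisj]
    simp only [id]
    rw [sum_congr rfl fun t ht => (hmem t ht).2, sum_const,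
      ← two_nsmul, smul_smul, add_nsmul, one_nsmul, add_comm, mul_comm]

lemma card_midpointPairs_le {m : ℕ} (hm : Odd m) {A : Finset G}
    (hA : ¬ ∃ B ⊆ A, B.card = m ∧ ∑ v ∈ B, v = 0) {y : G} (hy : y ∈ A)
    (hmy : m • y = 0) :
    (midpointPairs A y).card ≤ (m - 3) / 2 := by
  obtain ⟨k, rfl⟩ := hm
  by_contra! hlt
  obtain ⟨B, hBA, hcard, hsum⟩ :=
    exists_subset_card_sum_of_le_card_midpointPairs hy (k := k) (by omega)
  exact hA ⟨B, hBA, hcard, hsum.trans hmy⟩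

lemma erase_mem_midpointPairs {A s : Finset G} (hsA : s ⊆ A) (hs : s.card = 3) {x y z : G}
    (hx : x ∈ s) (hy : y ∈ s) (hz : z ∈ s) (hxz : x ≠ z) (hsum : x + z = y + y) :
    s.erase y ∈ midpointPairs A y := by
  have hxy : x ≠ y := by
    rintro rfl
    exact hxz (add_left_cancel hsum).symm
  have hzy : z ≠ y := by
    rintro rfl
    exact hxz (add_right_cancel hsum)
  have hcard : (s.erase y).card = 2 := by rw [card_erase_of_mem hy, hs]
  have hpair : s.erase y = {x, z} := by
    refine (eq_of_subset_of_card_le ?_ ?_).symm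
    · exact insert_subset (mem_erase.2 ⟨hxy, hx⟩)
        (singleton_subset_iff.2 (mem_erase.2 ⟨hzy, hz⟩))
    · rw [hcard, card_pair hxz]
  refine mem_midpointPairs.2 ⟨⟨erase_subset_erase y hsA, hcard⟩, ?_⟩
  rw [hpair, sum_pair hxz, hsum]

theorem ncard_threeAPs_le {m : ℕ} (hm : Odd m) (hmG : ∀ x : G, m • x = 0) (A : Finset G)
    (hA : ¬ ∃ B ⊆ A, B.card = m ∧ ∑ v ∈ B, v = 0) :
    {s : Finset G | s ⊆ A ∧ s.card = 3 ∧
        ∃ x ∈ s, ∃ y ∈ s, ∃ z ∈ s, x ≠ z ∧ x + z = y + y}.ncard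
      ≤ (m - 3) / 2 * A.card := by
  have hsub : {s : Finset G | s ⊆ A ∧ s.card = 3 ∧
      ∃ x ∈ s, ∃ y ∈ s, ∃ z ∈ s, x ≠ z ∧ x + z = y + y} ⊆
      ↑(A.biUnion fun y => (midpointPairs A y).image (insert y)) := by
    rintro s ⟨hsA, hs, x, hx, y, hy, z, hz, hxz, hsum⟩
    simp only [coe_biUnion, coe_image, Set.mem_iUnion, Set.mem_image, mem_coe]
    exact ⟨y, hsA hy, s.erase y, erase_mem_midpointPairs hsA hs hx hy hz hxz hsum,
      insert_erase hy⟩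
  calc _ ≤ (A.biUnion fun y => (midpointPairs A y).image (insert y)).card :=
        (Set.ncard_le_ncard hsub).trans_eq (Set.ncard_coe_finset _)
    _ ≤ ∑ y ∈ A, (midpointPairs A y).card :=
        card_biUnion_le.trans (sum_le_sum fun y _ => card_image_le)
    _ ≤ ∑ _y ∈ A, (m - 3) / 2 :=
        sum_le_sum fun y hy => card_midpointPairs_le hm hA hy (hmG y)
    _ = (m - 3) / 2 * A.card := by rw [sum_const, smul_eq_mul, mul_comm]

theorem stmt5_general (p n : ℕ) (hp : p.Prime) (hp3 : 3 ≤ p)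
    (A : Finset (Fin n → ZMod p))
    (hA : ¬ ∃ B ⊆ A, B.card = p ∧ ∑ v ∈ B, v = 0) :
    {s : Finset (Fin n → ZMod p) | s ⊆ A ∧ s.card = 3 ∧
        ∃ x ∈ s, ∃ y ∈ s, ∃ z ∈ s, x ≠ z ∧ x + z = y + y}.ncard
      ≤ (p - 3) / 2 * A.card := by
  have hexp : ∀ v : Fin n → ZMod p, p • v = 0 := fun v => by
    ext i
    simp
  exact ncard_threeAPs_le (hp.odd_of_ne_two (by omega)) hexp A hA

/-- Let p ≥ 3 be a prime and n ≥ 1. If A ⊆ F_p^n does not contain p distinct elements summing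
to zero, then the total number of three-term arithmetic progressions contained in A (i.e.
three-element subsets {x, y, z} of A with x ≠ z and x + z = 2y) is at most ((p-3)/2)·|A|. -/
theorem stmt5 (p n : ℕ) (hp : p.Prime) (hp3 : 3 ≤ p) (hn : 1 ≤ n)
    (A : Finset (Fin n → ZMod p))
    (hA : ¬ ∃ B ⊆ A, B.card = p ∧ ∑ v ∈ B, v = 0) :
    {s : Finset (Fin n → ZMod p) | s ⊆ A ∧ s.card = 3 ∧
        ∃ x ∈ s, ∃ y ∈ s, ∃ z ∈ s, x ≠ z ∧ x + z = y + y}.ncard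
      ≤ (p - 3) / 2 * A.card :=
  stmt5_general p n hp hp3 A hA
end

section
/- Let p be a prime and n ≥ 1 an integer. Then 𝔰(F_p^{n}) ≤ 𝔤(F_p^{n+1}). -/
/-!
Let `m` be a sequence of `𝔤(F_p^{n+1})` vectors of `F_p^n`. If some vector occurs `p` times, those
`p` copies sum to zero. Otherwise each vector `v` occurs `k < p` times, and its copies lift to `k`
distinct vectors `(v, c)` of `F_p^{n+1}`. The lifted set has `𝔤(F_p^{n+1})` elements,
hence `p` distinct elements summing to zero, and their projections form a zero-sum subsequence of
`m` of length `p`.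
-/

open Finset

theorem AddMonoid.exponent_eq_of_module_zmod (p : ℕ) [Fact p.Prime] (M : Type*) [AddCommGroup M]
    [Module (ZMod p) M] [Nontrivial M] : AddMonoid.exponent M = p :=
  (AddMonoid.exponent_eq_prime_iff Fact.out).2 fun x hx =>
    addOrderOf_eq_prime (by rw [← Nat.cast_smul_eq_nsmul (ZMod p), ZMod.natCast_self, zero_smul]) hx

theorem Multiset.exists_finset_map_eq_of_count_le {α β : Type*} [Fintype α] [DecidableEq β]
    (f : α → β) (m : Multiset β) (hm : ∀ b, m.count b ≤ #{a | f a = b}) :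
    ∃ s : Finset α, s.val.map f = m := by
  induction m using Multiset.induction_on with
  | empty => exact ⟨∅, rfl⟩
  | cons b m ih =>
    obtain ⟨s, rfl⟩ := ih fun c => (Multiset.count_le_count_cons _ _ _).trans (hm c)
    have hfresh : ¬ ({a | f a = b} : Finset α) ⊆ s := fun hsub => by
      have := hm b
      rw [Multiset.count_cons_self, Multiset.count_map, ← Finset.filter_val, Finset.card_val,
        Nat.succ_le_iff] at this
      refine (Finset.card_le_card fun a ha => ?_).not_gt this
      exact Finset.mem_filter.2 ⟨hsub ha, ((Finset.mem_filter.1 ha).2).symm⟩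
    obtain ⟨a, hab, has⟩ := Finset.not_subset.1 hfresh
    refine ⟨s.cons a has, ?_⟩
    rw [Finset.cons_val, Multiset.map_cons, (Finset.mem_filter.1 hab).2]

section

variable {G H : Type*} [AddCommGroup G] [AddCommGroup H]

theorem exists_zero_sum_of_gEGZ_le_card [Finite G] {A : Finset G} (hA : gEGZ G ≤ #A) :
    ∃ B ⊆ A, #B = AddMonoid.exponent G ∧ ∑ x ∈ B, x = 0 := by
  have := Fintype.ofFinite G
  have hne : {a | ∀ A : Finset G, a ≤ #A →
      ∃ B ⊆ A, #B = AddMonoid.exponent G ∧ ∑ x ∈ B, x = 0}.Nonempty :=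
    ⟨Fintype.card G + 1, fun A hA => absurd (hA.trans A.card_le_univ) (Nat.not_succ_le_self _)⟩
  exact Nat.sInf_mem hne A hA

theorem gEGZ_pos [Finite G] : 0 < gEGZ G := by
  refine Nat.pos_of_ne_zero fun h => ?_
  obtain ⟨B, hB, hcard, -⟩ := exists_zero_sum_of_gEGZ_le_card (A := (∅ : Finset G)) (by simp [h])
  rw [Finset.subset_empty.1 hB, Finset.card_empty] at hcard
  exact AddMonoid.exponent_ne_zero_of_finite hcard.symm

theorem EGZ_le_gEGZ_of_card_fiber [Fintype G] [DecidableEq H] (π : G →+ H)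
    (hexp : AddMonoid.exponent G = AddMonoid.exponent H)
    (hfiber : ∀ v, AddMonoid.exponent H - 1 ≤ #{x | π x = v}) : EGZ H ≤ gEGZ G := by
  refine Nat.sInf_le ⟨gEGZ_pos, fun m hm => ?_⟩
  by_cases hrep : ∃ v, AddMonoid.exponent H ≤ m.count v
  · obtain ⟨v, hv⟩ := hrep
    exact ⟨_, Multiset.le_count_iff_replicate_le.1 hv, Multiset.card_replicate _ _, by
      rw [Multiset.sum_replicate, AddMonoid.exponent_nsmul_eq_zero]⟩
  push Not at hrep
  obtain ⟨A, rfl⟩ := Multiset.exists_finset_map_eq_of_count_le π m fun v =>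
    (Nat.le_sub_one_of_lt (hrep v)).trans (hfiber v)
  obtain ⟨B, hBA, hBcard, hBsum⟩ :=
    exists_zero_sum_of_gEGZ_le_card (A := A) (by simpa using hm.ge)
  refine ⟨B.val.map π, Multiset.map_le_map (Finset.val_le_iff.2 hBA), ?_, ?_⟩
  · rw [Multiset.card_map, Finset.card_val, hBcard, hexp]
  · rw [← map_multiset_sum, Finset.sum_val]
    exact (congrArg π hBsum).trans (map_zero π)

end

def Fin.initAddMonoidHom (n : ℕ) (α : Type*) [AddCommGroup α] :
    (Fin (n + 1) → α) →+ (Fin n → α) :=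
  AddMonoidHom.mk' Fin.init fun _ _ => rfl

theorem Fin.card_le_card_init_fiber {n : ℕ} {α : Type*} [Fintype α] [DecidableEq α]
    (v : Fin n → α) : Fintype.card α ≤ #{x : Fin (n + 1) → α | Fin.init x = v} := by
  refine Finset.card_le_card_of_injOn (Fin.snoc (α := fun _ => α) v) (fun c _ => ?_)
    (Fin.snoc_right_injective (α := fun _ => α) v).injOn
  simp [Fin.init_snoc]

/-- Let p be a prime and n ≥ 1. Then 𝔰(F_p^n) ≤ 𝔤(F_p^{n+1}). -/
theorem stmt7 (p n : ℕ) (hp : p.Prime) (hn : 1 ≤ n) :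
    EGZ (Fin n → ZMod p) ≤ gEGZ (Fin (n + 1) → ZMod p) := by
  have : Fact p.Prime := ⟨hp⟩
  have : Nonempty (Fin n) := ⟨⟨0, hn⟩⟩
  refine EGZ_le_gEGZ_of_card_fiber (Fin.initAddMonoidHom n (ZMod p)) ?_ fun v => ?_
  · rw [AddMonoid.exponent_eq_of_module_zmod p, AddMonoid.exponent_eq_of_module_zmod p]
  · rw [AddMonoid.exponent_eq_of_module_zmod p]
    exact (Nat.sub_le _ _).trans ((ZMod.card p).symm.trans_le (Fin.card_le_card_init_fiber v))
end

section
/- For every non-trivial finite abelian group G, 𝔰(G) ≤ (exp(G) - 1)·(𝔤(G) - 1) + 1. -/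
theorem Multiset.card_le_mul_card_toFinset {α : Type*} [DecidableEq α] {m : Multiset α} {k : ℕ}
    (h : ∀ a, m.count a ≤ k) : Multiset.card m ≤ k * m.toFinset.card := by
  calc Multiset.card m = ∑ a ∈ m.toFinset, m.count a := (Multiset.toFinset_sum_count_eq m).symm
    _ ≤ m.toFinset.card • k := Finset.sum_le_card_nsmul _ _ _ fun a _ => h a
    _ = k * m.toFinset.card := by rw [smul_eq_mul, mul_comm]

theorem Multiset.exists_le_count_or_le_card_toFinset {α : Type*} [DecidableEq α]
    {m : Multiset α} {k n : ℕ} (hm : (k - 1) * (n - 1) < Multiset.card m) :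
    (∃ a, k ≤ m.count a) ∨ n ≤ m.toFinset.card := by
  by_contra! h
  have hcard : Multiset.card m ≤ (k - 1) * m.toFinset.card :=
    Multiset.card_le_mul_card_toFinset fun a => Nat.le_sub_one_of_lt (h.1 a)
  have : (k - 1) * m.toFinset.card ≤ (k - 1) * (n - 1) := Nat.mul_le_mul_left _ (by omega)
  omega

theorem Finset.val_le_of_subset_toFinset {α : Type*} [DecidableEq α] {B : Finset α}
    {m : Multiset α} (h : B ⊆ m.toFinset) : B.val ≤ m :=
  (Multiset.le_iff_subset B.nodup).2 fun _ hb => Multiset.mem_toFinset.1 (h hb)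

theorem exists_subset_card_eq_exponent_sum_eq_zero_of_gEGZ_le_card {G : Type*} [AddCommGroup G]
    [Fintype G] {A : Finset G} (hA : gEGZ G ≤ A.card) :
    ∃ B ⊆ A, B.card = AddMonoid.exponent G ∧ ∑ x ∈ B, x = 0 := by
  classical
  have hne : {a | ∀ A : Finset G, a ≤ A.card →
      ∃ B ⊆ A, B.card = AddMonoid.exponent G ∧ ∑ x ∈ B, x = 0}.Nonempty :=
    ⟨Fintype.card G + 1, fun A hA => absurd (Finset.card_le_univ A) (by omega)⟩
  exact Nat.sInf_mem hne A hA

/-- A long sequence either repeats some element `exp(G)` times, giving the zero-sum subsequence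
`exp(G) • a = 0`, or has at least `𝔤(G)` distinct terms, among which `𝔤(G)` provides one. -/
theorem exists_le_card_eq_exponent_sum_eq_zero_of_lt_card {G : Type*} [AddCommGroup G]
    [Fintype G] {m : Multiset G}
    (hm : (AddMonoid.exponent G - 1) * (gEGZ G - 1) < Multiset.card m) :
    ∃ t ≤ m, Multiset.card t = AddMonoid.exponent G ∧ t.sum = 0 := by
  classical
  rcases Multiset.exists_le_count_or_le_card_toFinset hm with ⟨a, ha⟩ | hsupp
  · refine ⟨Multiset.replicate (AddMonoid.exponent G) a, Multiset.le_count_iff_replicate_le.1 ha,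
      Multiset.card_replicate _ _, ?_⟩
    rw [Multiset.sum_replicate, AddMonoid.exponent_nsmul_eq_zero]
  · obtain ⟨B, hBm, hBcard, hBsum⟩ :=
      exists_subset_card_eq_exponent_sum_eq_zero_of_gEGZ_le_card hsupp
    exact ⟨B.val, Finset.val_le_of_subset_toFinset hBm, hBcard, (Finset.sum_val B).trans hBsum⟩

theorem stmt14_general (G : Type*) [AddCommGroup G] [Fintype G] :
    EGZ G ≤ (AddMonoid.exponent G - 1) * (gEGZ G - 1) + 1 :=
  Nat.sInf_le ⟨Nat.succ_pos _, fun _ hm =>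
    exists_le_card_eq_exponent_sum_eq_zero_of_lt_card (hm ▸ Nat.lt_succ_self _)⟩

/-- For every non-trivial finite abelian group G, 𝔰(G) ≤ (exp(G) - 1)·(𝔤(G) - 1) + 1. -/
theorem stmt14 (G : Type*) [AddCommGroup G] [Fintype G] [Nontrivial G] :
    EGZ G ≤ (AddMonoid.exponent G - 1) * (gEGZ G - 1) + 1 :=
  stmt14_general G
end
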